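/- arXiv:1103.6206 — 2 statements merged into one kernel-verified Lean document; each statement's English description precedes it below -/
import Mathlib

section
/- With the bottom row of a 3-wide grid colored (a, b, c₀) with a, b, c₀ pairwise distinct (state 123), the number of ways to color the next row with three pairwise distinct colors (i₁, i₂, i₃) from {1,...,c} satisfying i₁ ≠ a, i₂ ≠ b, i₃ ≠ c₀ equals c³ - 6c² + 14c - 13. -/
/-!
Count the rows colour by colour: `x ≠ a`, then `y ∉ {x, b}`, then `z ∉ {x, y, c₀}`.
The last choice leaves `c - 3` colours, plus one for each of `x`, `y` that already equals `c₀`.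
-/

open Finset

variable {α : Type*} [Fintype α] [DecidableEq α]

theorem cast_card_compl (s : Finset α) : (#sᶜ : ℤ) = Fintype.card α - #s := by
  rw [← card_compl_add_card s]; push_cast; ring

theorem card_ne_ne (x y : α) :
    (#{w | w ≠ x ∧ w ≠ y} : ℤ) = Fintype.card α - 2 + if x = y then 1 else 0 := by
  have : ({w | w ≠ x ∧ w ≠ y} : Finset α) = {x, y}ᶜ := by ext; simp
  rw [this, cast_card_compl, card_insert_eq_ite]
  split_ifs <;> simp_all; ring

theorem card_ne_ne_ne {x y : α} (hxy : x ≠ y) (z : α) :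
    (#{w | w ≠ x ∧ w ≠ y ∧ w ≠ z} : ℤ) =
      Fintype.card α - 3 + (if z = x then 1 else 0) + if z = y then 1 else 0 := by
  have : ({w | w ≠ x ∧ w ≠ y ∧ w ≠ z} : Finset α) = {x, y, z}ᶜ := by ext; simp
  rw [this, cast_card_compl, card_insert_eq_ite, card_insert_eq_ite]
  split_ifs <;> simp_all <;> ring

theorem card_rows_avoiding_eq_sum (a b c : α) :
    Fintype.card {t : α × α × α //
        t.1 ≠ t.2.1 ∧ t.1 ≠ t.2.2 ∧ t.2.1 ≠ t.2.2 ∧ t.1 ≠ a ∧ t.2.1 ≠ b ∧ t.2.2 ≠ c} =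
      ∑ x with x ≠ a, ∑ y with y ≠ x ∧ y ≠ b, #{z | z ≠ x ∧ z ≠ y ∧ z ≠ c} := by
  rw [Fintype.card_subtype, card_filter]
  simp only [Fintype.sum_prod_type, sum_filter, card_filter]
  refine sum_congr rfl fun x _ => ?_
  split_ifs with hxa
  · refine sum_congr rfl fun y _ => ?_
    split_ifs with hy
    · exact sum_congr rfl fun z _ => if_congr (by grind) rfl rfl
    · exact sum_eq_zero fun z _ => if_neg (by grind)
  · exact sum_eq_zero fun y _ => sum_eq_zero fun z _ => if_neg (by grind)

theorem sum_card_ne_ne_ne (x : α) {b c : α} (hbc : b ≠ c) :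
    ∑ y with y ≠ x ∧ y ≠ b, (#{z | z ≠ x ∧ z ≠ y ∧ z ≠ c} : ℤ) =
      (Fintype.card α - 2) * (Fintype.card α - 3) + 1 +
        (Fintype.card α - 3) * ((if x = b then 1 else 0) + if x = c then 1 else 0) := by
  rw [sum_congr rfl fun y hy => card_ne_ne_ne (mem_filter.1 hy).2.1.symm c,
    sum_add_distrib, sum_const, sum_ite_eq, nsmul_eq_mul, card_ne_ne]
  rcases eq_or_ne x b with rfl | hxb
  · simp [hbc, hbc.symm]; ring
  rcases eq_or_ne x c with rfl | hxc
  · simp [hxb]; ring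
  · simp [hxb, hxc, hxc.symm, hbc.symm]

theorem card_rows_avoiding {a b c : α} (hab : a ≠ b) (hac : a ≠ c) (hbc : b ≠ c) :
    (Fintype.card {t : α × α × α //
        t.1 ≠ t.2.1 ∧ t.1 ≠ t.2.2 ∧ t.2.1 ≠ t.2.2 ∧ t.1 ≠ a ∧ t.2.1 ≠ b ∧ t.2.2 ≠ c} : ℤ) =
      (Fintype.card α : ℤ) ^ 3 - 6 * (Fintype.card α : ℤ) ^ 2 + 14 * Fintype.card α - 13 := by
  simp only [card_rows_avoiding_eq_sum, Nat.cast_sum, sum_card_ne_ne_ne _ hbc]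
  rw [sum_add_distrib, sum_const, nsmul_eq_mul, ← mul_sum, sum_add_distrib, sum_ite_eq',
    sum_ite_eq', filter_ne', cast_card_erase_of_mem (mem_univ a), card_univ]
  simp [hab.symm, hac.symm]
  ring

/-- Transfer-matrix entry `M[123,123]`: with bottom row `(a,b,c₀)` pairwise
distinct, the number of next rows `(i₁,i₂,i₃)` pairwise distinct with
`i₁ ≠ a`, `i₂ ≠ b`, `i₃ ≠ c₀` equals `c³ - 6c² + 14c - 13`. -/
theorem transfer_123_123 (c : ℕ) (a b c₀ : Fin c)
    (hab : a ≠ b) (hac : a ≠ c₀) (hbc : b ≠ c₀) :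
    (Fintype.card {t : Fin c × Fin c × Fin c //
        t.1 ≠ t.2.1 ∧ t.1 ≠ t.2.2 ∧ t.2.1 ≠ t.2.2 ∧
        t.1 ≠ a ∧ t.2.1 ≠ b ∧ t.2.2 ≠ c₀} : ℤ) =
      (c : ℤ) ^ 3 - 6 * (c : ℤ) ^ 2 + 14 * (c : ℤ) - 13 := by
  simpa using card_rows_avoiding hab hac hbc
end

section
/- The number of proper c-colorings of the 3×n grid graph P_3 × P_n satisfies, for n ≥ 1, the vector recurrence a(n+1) = (c²-3c+3)·a(n) + (c²-4c+5)·b(n) and b(n+1) = (c³-6c²+13c-10)·a(n) + (c³-6c²+14c-13)·b(n), where a(n) is the number of proper colorings whose top row has pattern (x,y,x) and b(n) the number whose top row has three distinct colors; the total number of proper colorings is a(n)+b(n), with a(1) = c(c-1) and b(1) = c(c-1)(c-2). -/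
/-- Adjacency in the `r × n` grid: lattice points differing by 1 in exactly
one coordinate. -/
def GridAdj {r n : ℕ} (p q : Fin r × Fin n) : Prop :=
  (p.1 = q.1 ∧ ((p.2 : ℕ) + 1 = q.2 ∨ (q.2 : ℕ) + 1 = p.2)) ∨
  (p.2 = q.2 ∧ ((p.1 : ℕ) + 1 = q.1 ∨ (q.1 : ℕ) + 1 = p.1))

instance {r n : ℕ} (p q : Fin r × Fin n) : Decidable (GridAdj p q) := by
  unfold GridAdj; infer_instance

/-- Number of proper `c`-colorings of the `r × n` grid graph. -/
def gridColorings (r n c : ℕ) : ℕ :=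
  Fintype.card {f : Fin r × Fin n → Fin c //
    ∀ p q, GridAdj p q → f p ≠ f q}

/-- `a(n+1)`: proper colorings of the 3×(n+1) grid whose top row (last column)
has pattern `(x,y,x)`. -/
def aCount (n c : ℕ) : ℕ :=
  Fintype.card {f : Fin 3 × Fin (n + 1) → Fin c //
    (∀ p q, GridAdj p q → f p ≠ f q) ∧ f (0, Fin.last n) = f (2, Fin.last n)}

/-- `b(n+1)`: proper colorings of the 3×(n+1) grid whose top row uses three
pairwise distinct colors. -/
def bCount (n c : ℕ) : ℕ :=
  Fintype.card {f : Fin 3 × Fin (n + 1) → Fin c //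
    (∀ p q, GridAdj p q → f p ≠ f q) ∧ f (0, Fin.last n) ≠ f (2, Fin.last n)}

/-!
A proper coloring of the `3 × (n + 2)` grid is a proper coloring `g` of the `3 × (n + 1)` grid
together with a proper last column `v` differing row by row from the last column `u` of `g`.
For a proper column `u`, the number of such `v` of either kind depends only on the kind of `u`,
which gives the transfer matrix. To count the `v`, choose the middle color `b ≠ u 1` first: the
top and bottom colors are then independent, avoiding `{u 0, b}` and `{u 2, b}` respectively, and
for `v` of the form `(x, y, x)` the common color avoids `{u 0, u 2, b}`. The single columns
counted by `a(1)` and `b(1)` are injections `Fin 2 ↪ Fin c` and `Fin 3 ↪ Fin c`.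
-/

open Finset

section General

variable {α β : Type*} [Fintype α] [Fintype β]

theorem card_filter_prod_and (p : α → Prop) (q : α → β → Prop) [DecidablePred p]
    [∀ a, DecidablePred (q a)] :
    #{x : α × β | p x.1 ∧ q x.1 x.2} = ∑ a with p a, #{b | q a b} := by
  simp only [card_filter, Fintype.sum_prod_type, sum_filter, ite_and, sum_ite_irrel, sum_const_zero]

theorem cast_descFactorial_three (a : ℕ) : (a.descFactorial 3 : ℤ) = a * (a - 1) * (a - 2) := by
  rw [Nat.descFactorial_succ, Nat.cast_mul, Nat.cast_descFactorial_two]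
  rcases le_or_gt 2 a with h | h
  · rw [Nat.cast_sub h]; push_cast; ring
  · interval_cases a <;> simp

end General

section Grid

variable {α : Type*} {r n : ℕ}

def IsProperColoring (f : Fin r × Fin n → α) : Prop :=
  ∀ p q, GridAdj p q → f p ≠ f q

def IsProperColumn (v : Fin r → α) : Prop :=
  ∀ i j : Fin r, (i : ℕ) + 1 = j → v i ≠ v j

def column (f : Fin r × Fin n → α) (t : Fin n) : Fin r → α := fun i => f (i, t)

def Compatible (u v : Fin r → α) : Prop := ∀ i, u i ≠ v i

instance [DecidableEq α] [Fintype α] :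
    DecidablePred (IsProperColoring (α := α) (r := r) (n := n)) :=
  fun _ => by unfold IsProperColoring; infer_instance

instance [DecidableEq α] : DecidablePred (IsProperColumn (α := α) (r := r)) :=
  fun _ => by unfold IsProperColumn; infer_instance

instance [DecidableEq α] (u : Fin r → α) : DecidablePred (Compatible u) :=
  fun _ => by unfold Compatible; infer_instance

theorem isProperColoring_iff {f : Fin r × Fin (n + 1) → α} :
    IsProperColoring f ↔
      (∀ t, IsProperColumn (column f t)) ∧
        ∀ t : Fin n, Compatible (column f t.castSucc) (column f t.succ) := by
  constructor
  · intro hf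
    refine ⟨fun t i j hij => hf _ _ (Or.inr ⟨rfl, Or.inl hij⟩),
      fun t i => hf _ _ (Or.inl ⟨rfl, Or.inl (by simp)⟩)⟩
  · rintro ⟨hcol, hrow⟩ ⟨i, s⟩ ⟨j, t⟩ (⟨rfl, hst | hts⟩ | ⟨rfl, hij | hji⟩)
    · obtain ⟨s, rfl⟩ : ∃ s' : Fin n, s'.castSucc = s := ⟨⟨s, by simp at hst; omega⟩, rfl⟩
      obtain rfl : s.succ = t := Fin.ext (by simpa using hst)
      exact hrow s i
    · obtain ⟨t, rfl⟩ : ∃ t' : Fin n, t'.castSucc = t := ⟨⟨t, by simp at hts; omega⟩, rfl⟩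
      obtain rfl : t.succ = s := Fin.ext (by simpa using hts)
      exact (hrow t i).symm
    · exact hcol s i j hij
    · exact (hcol s j i hji).symm

theorem IsProperColoring.isProperColumn {f : Fin r × Fin (n + 1) → α} (hf : IsProperColoring f)
    (t : Fin (n + 1)) : IsProperColumn (column f t) :=
  (isProperColoring_iff.1 hf).1 t

def dropLastColumn (f : Fin r × Fin (n + 1) → α) : Fin r × Fin n → α :=
  fun p => f (p.1, p.2.castSucc)

theorem isProperColoring_succ_iff {f : Fin r × Fin (n + 2) → α} :
    IsProperColoring f ↔ IsProperColoring (dropLastColumn f) ∧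
      IsProperColumn (column f (Fin.last _)) ∧
      Compatible (column (dropLastColumn f) (Fin.last n)) (column f (Fin.last _)) := by
  have hdrop : ∀ t, column (dropLastColumn f) t = column f t.castSucc := fun _ => rfl
  rw [isProperColoring_iff, isProperColoring_iff,
    Fin.forall_fin_succ' (P := fun t => IsProperColumn (column f t)),
    Fin.forall_fin_succ' (P := fun t => Compatible (column f t.castSucc) (column f t.succ))]
  simp only [hdrop, Fin.succ_castSucc, Fin.succ_last]
  tauto

theorem isProperColoring_one_iff {f : Fin r × Fin 1 → α} :
    IsProperColoring f ↔ IsProperColumn (column f (Fin.last 0)) := by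
  simp [isProperColoring_iff, Fin.forall_fin_one]

def splitLastColumnEquiv : (Fin r × Fin (n + 1) → α) ≃ (Fin r × Fin n → α) × (Fin r → α) where
  toFun f := (dropLastColumn f, column f (Fin.last n))
  invFun x p := Fin.lastCases (x.2 p.1) (fun t => x.1 (p.1, t)) p.2
  left_inv f := by
    funext ⟨i, t⟩
    induction t using Fin.lastCases <;> simp [dropLastColumn, column]
  right_inv x := by
    ext : 1 <;> funext <;> simp [dropLastColumn, column]

end Grid

section Counting

variable {α : Type*} [Fintype α] [DecidableEq α] {r n : ℕ}

theorem card_properColorings_one (T : (Fin r → α) → Prop) [DecidablePred T] :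
    #{f : Fin r × Fin 1 → α | IsProperColoring f ∧ T (column f (Fin.last 0))} =
      #{v | IsProperColumn v ∧ T v} :=
  card_equiv ((Equiv.prodUnique _ _).arrowCongr (Equiv.refl α)) fun f => by
    simp [isProperColoring_one_iff]; rfl

theorem card_properColorings_succ (T : (Fin r → α) → Prop) [DecidablePred T] :
    #{f : Fin r × Fin (n + 2) → α | IsProperColoring f ∧ T (column f (Fin.last _))} =
      ∑ g with IsProperColoring g,
        #{v | IsProperColumn v ∧ Compatible (column g (Fin.last n)) v ∧ T v} := by
  rw [← card_filter_prod_and]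
  exact card_equiv splitLastColumnEquiv fun f => by
    simp [isProperColoring_succ_iff, splitLastColumnEquiv, and_assoc]

end Counting

section ThreeRows

variable {α : Type*}

theorem isProperColumn_three_iff {v : Fin 3 → α} :
    IsProperColumn v ↔ v 0 ≠ v 1 ∧ v 1 ≠ v 2 := by
  simp [IsProperColumn, Fin.forall_fin_succ]

theorem compatible_three_iff {u v : Fin 3 → α} :
    Compatible u v ↔ u 0 ≠ v 0 ∧ u 1 ≠ v 1 ∧ u 2 ≠ v 2 := by
  simp [Compatible, Fin.forall_fin_succ]

variable [Fintype α] [DecidableEq α]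

theorem card_filter_notMem_insert (b : α) (s : Finset α) :
    (#{a | a ∉ insert b s} : ℤ) = Fintype.card α - #s - 1 + if b ∈ s then 1 else 0 := by
  rw [filter_notMem_eq_sdiff, card_univ_sdiff, Nat.cast_sub (card_le_univ _), card_insert_eq_ite]
  split_ifs <;> push_cast <;> ring

local notation "C" => (Fintype.card α : ℤ)

theorem card_properColumn_compatible_ends_eq {u : Fin 3 → α} (hu : IsProperColumn u) :
    (#{v | IsProperColumn v ∧ Compatible u v ∧ v 0 = v 2} : ℤ) =
      if u 0 = u 2 then C ^ 2 - 3 * C + 3 else C ^ 2 - 4 * C + 5 := by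
  rw [isProperColumn_three_iff] at hu
  set S : Finset α := {u 0, u 2} with hS
  have hcard : #{v | IsProperColumn v ∧ Compatible u v ∧ v 0 = v 2} =
      #{x : α × α | x.1 ≠ u 1 ∧ x.2 ∉ insert x.1 S} := by
    refine card_nbij' (fun v => (v 1, v 0)) (fun x => ![x.2, x.1, x.2]) ?_ ?_ ?_ ?_ <;>
      intro v hv <;> simp [hS, isProperColumn_three_iff, compatible_three_iff] at hv ⊢
    · grind
    · grind
    · ext i; fin_cases i <;> simp [hv.2.2]
  have hS_erase : (univ.erase (u 1)).filter (· ∈ S) = S := by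
    ext a; simp [hS]; grind
  have hpos : 1 ≤ Fintype.card α := Fintype.card_pos_iff.mpr ⟨u 0⟩
  rw [hcard, card_filter_prod_and (fun b => b ≠ u 1) (fun b a => a ∉ insert b S), Nat.cast_sum,
    sum_congr rfl fun b _ => card_filter_notMem_insert b S, sum_add_distrib, sum_const, sum_boole,
    filter_ne', hS_erase, card_erase_of_mem (mem_univ _), card_univ, nsmul_eq_mul,
    Nat.cast_sub hpos]
  split_ifs with h
  · simp [hS, h]; ring
  · rw [hS, card_pair h]; push_cast; ring

theorem card_properColumn_compatible {u : Fin 3 → α} (hu : IsProperColumn u) :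
    (#{v | IsProperColumn v ∧ Compatible u v} : ℤ) =
      (C - 1) * (C - 2) ^ 2 + 2 * (C - 2) + if u 0 = u 2 then 1 else 0 := by
  rw [isProperColumn_three_iff] at hu
  have hcard : #{v | IsProperColumn v ∧ Compatible u v} =
      #{x : α × α × α |
        x.1 ≠ u 1 ∧ x.2.1 ∉ ({x.1, u 0} : Finset α) ∧ x.2.2 ∉ ({x.1, u 2} : Finset α)} := by
    refine card_nbij' (fun v => (v 1, v 0, v 2)) (fun x => ![x.2.1, x.1, x.2.2]) ?_ ?_ ?_ ?_ <;>
      intro v hv <;> simp [isProperColumn_three_iff, compatible_three_iff] at hv ⊢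
    · grind
    · grind
    · ext i; fin_cases i <;> rfl
  have hprod : ∀ s t : Finset α,
      #{y : α × α | y.1 ∉ s ∧ y.2 ∉ t} = #{a | a ∉ s} * #{d | d ∉ t} := by
    intro s t
    rw [← univ_product_univ, filter_product (fun a => a ∉ s) (fun d => d ∉ t), card_product]
  have hpos : 1 ≤ Fintype.card α := Fintype.card_pos_iff.mpr ⟨u 0⟩
  rw [hcard, card_filter_prod_and (fun b => b ≠ u 1)
    (fun b (y : α × α) => y.1 ∉ ({b, u 0} : Finset α) ∧ y.2 ∉ ({b, u 2} : Finset α)), Nat.cast_sum]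
  simp only [hprod, Nat.cast_mul, card_filter_notMem_insert, mem_singleton]
  simp [add_mul, mul_add, ite_mul, mul_ite, sum_add_distrib, sum_ite_eq', filter_ne', hu.1,
    hu.2.symm, eq_comm (a := u 2), Nat.cast_sub hpos]
  split_ifs <;> ring

theorem card_properColumn_compatible_ends_ne {u : Fin 3 → α} (hu : IsProperColumn u) :
    (#{v | IsProperColumn v ∧ Compatible u v ∧ v 0 ≠ v 2} : ℤ) =
      if u 0 = u 2 then C ^ 3 - 6 * C ^ 2 + 13 * C - 10 else C ^ 3 - 6 * C ^ 2 + 14 * C - 13 := by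
  have hsplit := card_filter_add_card_filter_not (s := {v | IsProperColumn v ∧ Compatible u v})
    (fun v : Fin 3 → α => v 0 = v 2)
  simp only [filter_filter, and_assoc] at hsplit
  have hA := card_properColumn_compatible_ends_eq hu
  have hT := card_properColumn_compatible hu
  rw [← hsplit, Nat.cast_add] at hT
  split_ifs at hA hT ⊢ <;> linear_combination hT - hA

theorem card_injective_fin (k : ℕ) :
    #{w : Fin k → α | Function.Injective w} = (Fintype.card α).descFactorial k := by
  rw [← Fintype.card_subtype, Fintype.card_congr (Equiv.subtypeInjectiveEquivEmbedding _ _),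
    Fintype.card_embedding_eq, Fintype.card_fin]

theorem card_properColumn_ends_eq :
    #{v : Fin 3 → α | IsProperColumn v ∧ v 0 = v 2} = (Fintype.card α).descFactorial 2 := by
  rw [← card_injective_fin]
  refine card_nbij' (fun v => ![v 0, v 1]) (fun w => ![w 0, w 1, w 0]) ?_ ?_ ?_ ?_ <;>
    intro v hv <;> simp [isProperColumn_three_iff, Fin.forall_fin_succ, Function.Injective] at hv ⊢
  · grind
  · exact hv
  · ext i; fin_cases i <;> simp [hv.2]
  · ext i; fin_cases i <;> rfl

theorem card_properColumn_ends_ne :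
    #{v : Fin 3 → α | IsProperColumn v ∧ v 0 ≠ v 2} = (Fintype.card α).descFactorial 3 := by
  rw [← card_injective_fin]
  congr 1; ext v
  simp [isProperColumn_three_iff, Fin.forall_fin_succ, Function.Injective]
  grind

end ThreeRows

section Transfer

variable {α : Type*} [Fintype α] [DecidableEq α] {n : ℕ}

theorem card_properColorings_succ_of_card_compatible (T : (Fin 3 → α) → Prop) [DecidablePred T]
    (x y : ℤ)
    (hT : ∀ u, IsProperColumn u →
      (#{v | IsProperColumn v ∧ Compatible u v ∧ T v} : ℤ) = if u 0 = u 2 then x else y) :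
    (#{f : Fin 3 × Fin (n + 2) → α | IsProperColoring f ∧ T (column f (Fin.last _))} : ℤ) =
      x * #{g : Fin 3 × Fin (n + 1) → α |
          IsProperColoring g ∧ column g (Fin.last n) 0 = column g (Fin.last n) 2} +
        y * #{g : Fin 3 × Fin (n + 1) → α |
          IsProperColoring g ∧ column g (Fin.last n) 0 ≠ column g (Fin.last n) 2} := by
  rw [card_properColorings_succ, Nat.cast_sum,
    sum_congr rfl fun g hg => hT _ ((mem_filter.1 hg).2.isProperColumn _), sum_ite, sum_const,
    sum_const, filter_filter, filter_filter, nsmul_eq_mul, nsmul_eq_mul, mul_comm x, mul_comm y]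

end Transfer

theorem aCount_eq_card (n c : ℕ) :
    aCount n c = #{f : Fin 3 × Fin (n + 1) → Fin c |
      IsProperColoring f ∧ column f (Fin.last n) 0 = column f (Fin.last n) 2} :=
  Fintype.card_subtype _

theorem bCount_eq_card (n c : ℕ) :
    bCount n c = #{f : Fin 3 × Fin (n + 1) → Fin c |
      IsProperColoring f ∧ column f (Fin.last n) 0 ≠ column f (Fin.last n) 2} :=
  Fintype.card_subtype _

theorem gridColorings_eq_aCount_add_bCount (n c : ℕ) :
    gridColorings 3 (n + 1) c = aCount n c + bCount n c := by
  rw [aCount_eq_card, bCount_eq_card, gridColorings, Fintype.card_subtype, ← filter_filter,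
    ← filter_filter]
  exact (card_filter_add_card_filter_not _).symm

/-- The vector recurrence for the 3×n grid: for `n ≥ 1` (here `aCount (n-1) c`
plays the role of `a(n)`), `a(n+1) = (c²-3c+3)a(n) + (c²-4c+5)b(n)`,
`b(n+1) = (c³-6c²+13c-10)a(n) + (c³-6c²+14c-13)b(n)`, the total number of
proper colorings is `a(n)+b(n)`, and `a(1)=c(c-1)`, `b(1)=c(c-1)(c-2)`. -/
theorem grid3_recurrence (c : ℕ) :
    (∀ n : ℕ,
      (aCount (n + 1) c : ℤ) =
        ((c : ℤ) ^ 2 - 3 * c + 3) * aCount n c +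
        ((c : ℤ) ^ 2 - 4 * c + 5) * bCount n c ∧
      (bCount (n + 1) c : ℤ) =
        ((c : ℤ) ^ 3 - 6 * c ^ 2 + 13 * c - 10) * aCount n c +
        ((c : ℤ) ^ 3 - 6 * c ^ 2 + 14 * c - 13) * bCount n c) ∧
    (∀ n : ℕ, gridColorings 3 (n + 1) c = aCount n c + bCount n c) ∧
    (aCount 0 c : ℤ) = (c : ℤ) * ((c : ℤ) - 1) ∧
    (bCount 0 c : ℤ) = (c : ℤ) * ((c : ℤ) - 1) * ((c : ℤ) - 2) := by
  refine ⟨fun n => ⟨?_, ?_⟩, fun n => gridColorings_eq_aCount_add_bCount n c, ?_, ?_⟩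
  · rw [aCount_eq_card, aCount_eq_card, bCount_eq_card]
    simpa using card_properColorings_succ_of_card_compatible (α := Fin c) _ _ _
      fun _ => card_properColumn_compatible_ends_eq
  · rw [bCount_eq_card, aCount_eq_card, bCount_eq_card]
    simpa using card_properColorings_succ_of_card_compatible (α := Fin c) _ _ _
      fun _ => card_properColumn_compatible_ends_ne
  · rw [aCount_eq_card, card_properColorings_one (fun v => v 0 = v 2), card_properColumn_ends_eq,
      Nat.cast_descFactorial_two]
    simp
  · rw [bCount_eq_card, card_properColorings_one (fun v => v 0 ≠ v 2), card_properColumn_ends_ne,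
      cast_descFactorial_three]
    simp
end
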